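/- arXiv:2003.04870 — 3 statements merged into one kernel-verified Lean document; each statement's English description precedes it below -/
import Mathlib

section
/- Let M be a set, T : M → M a map, and G a group acting on M, with T G-equivariant. Let S ⊆ M be an invariant set of T, g ∈ G, K ∈ ℕ, Ψ : M → (Fin K → ℝ) a dictionary, and γ an invertible K×K real matrix such that Ψ(g • x) = γ⁻¹ ⬝ Ψ(x) for all x ∈ S. Suppose K_i is a local Koopman representation for Ψ on S and K_j is a local Koopman representation for Ψ on g • S. Then for every x ∈ S, K_i ⬝ Ψ(x) = (γ ⬝ K_j ⬝ γ⁻¹) ⬝ Ψ(x). -/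
/-- Let `S` be an invariant set of the `G`-equivariant map `T`, `Ψ` a dictionary, and `γ`
an invertible matrix with `Ψ (g • x) = γ⁻¹ *ᵥ Ψ x` on `S`. If `Kᵢ` is a local Koopman
representation for `Ψ` on `S` and `Kⱼ` a local Koopman representation for `Ψ` on `g • S`,
then `Kᵢ *ᵥ Ψ x = (γ * Kⱼ * γ⁻¹) *ᵥ Ψ x` for all `x ∈ S`. -/
theorem local_koopman_conjugation_pointwise
    {M : Type*} {G : Type*} [Group G] [MulAction G M]
    (T : M → M) (hT : ∀ (g : G) (x : M), T (g • x) = g • T x)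
    (S : Set M) (hS : ∀ x ∈ S, T x ∈ S) (g : G) (K : ℕ)
    (Ψ : M → (Fin K → ℝ)) (γ : Matrix (Fin K) (Fin K) ℝ) (hγ : IsUnit γ)
    (hΨγ : ∀ x ∈ S, Ψ (g • x) = γ⁻¹.mulVec (Ψ x))
    (Ki Kj : Matrix (Fin K) (Fin K) ℝ)
    (hKi : ∀ x ∈ S, Ki.mulVec (Ψ x) = Ψ (T x))
    (hKj : ∀ y ∈ (fun x => g • x) '' S, Kj.mulVec (Ψ y) = Ψ (T y)) :
    ∀ x ∈ S, Ki.mulVec (Ψ x) = (γ * Kj * γ⁻¹).mulVec (Ψ x) := by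
  intro x hx
  have h1 : Kj.mulVec (Ψ (g • x)) = Ψ (T (g • x)) :=
    hKj _ ⟨x, hx, rfl⟩
  rw [hT, hΨγ x hx, hΨγ (T x) (hS x hx)] at h1
  have : (γ * Kj * γ⁻¹).mulVec (Ψ x) = (γ * (Kj * γ⁻¹)).mulVec (Ψ x) := by
    rw [mul_assoc]
  rw [hKi x hx, this, ← Matrix.mulVec_mulVec, ← Matrix.mulVec_mulVec, h1,
    Matrix.mulVec_mulVec, Matrix.mul_nonsing_inv _ (Matrix.isUnit_iff_isUnit_det γ |>.mp hγ),
    Matrix.one_mulVec]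
end

section
/- Let M be a set, T : M → M a map, and G a group acting on M, with T G-equivariant. Let S ⊆ M be an invariant set of T, g ∈ G, K ∈ ℕ, Ψ : M → (Fin K → ℝ) a dictionary, and γ an invertible K×K real matrix such that Ψ(g • x) = γ⁻¹ ⬝ Ψ(x) for all x ∈ S. Suppose K_i is a local Koopman representation for Ψ on S, K_j is a local Koopman representation for Ψ on g • S, and the vectors {Ψ(x) : x ∈ S} span ℝ^K. Then K_i = γ ⬝ K_j ⬝ γ⁻¹. -/
/-- Under the hypotheses of the pointwise conjugation theorem, if moreover the vectors
`{Ψ x : x ∈ S}` span `ℝ^K`, then the local Koopman operators satisfy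
`Kᵢ = γ * Kⱼ * γ⁻¹`. -/
theorem local_koopman_conjugation
    {M : Type*} {G : Type*} [Group G] [MulAction G M]
    (T : M → M) (hT : ∀ (g : G) (x : M), T (g • x) = g • T x)
    (S : Set M) (hS : ∀ x ∈ S, T x ∈ S) (g : G) (K : ℕ)
    (Ψ : M → (Fin K → ℝ)) (γ : Matrix (Fin K) (Fin K) ℝ) (hγ : IsUnit γ)
    (hΨγ : ∀ x ∈ S, Ψ (g • x) = γ⁻¹.mulVec (Ψ x))
    (Ki Kj : Matrix (Fin K) (Fin K) ℝ)
    (hKi : ∀ x ∈ S, Ki.mulVec (Ψ x) = Ψ (T x))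
    (hKj : ∀ y ∈ (fun x => g • x) '' S, Kj.mulVec (Ψ y) = Ψ (T y))
    (hspan : Submodule.span ℝ {v : Fin K → ℝ | ∃ x ∈ S, v = Ψ x} = ⊤) :
    Ki = γ * Kj * γ⁻¹ := by
  have hgg : γ * γ⁻¹ = 1 := Matrix.mul_nonsing_inv γ ((Matrix.isUnit_iff_isUnit_det γ).mp hγ)
  have key : ∀ x ∈ S, Ki.mulVec (Ψ x) = (γ * Kj * γ⁻¹).mulVec (Ψ x) := by
    intro x hx
    have h1 : (γ * Kj * γ⁻¹).mulVec (Ψ x)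
        = γ.mulVec (Kj.mulVec (γ⁻¹.mulVec (Ψ x))) := by
      simp [Matrix.mulVec_mulVec, Matrix.mul_assoc]
    rw [hKi x hx, h1, ← hΨγ x hx, hKj _ ⟨x, hx, rfl⟩, hT, hΨγ _ (hS x hx),
      Matrix.mulVec_mulVec, hgg, Matrix.one_mulVec]
  apply Matrix.toLin'.injective
  apply LinearMap.ext_on hspan
  rintro v ⟨x, hx, rfl⟩
  simpa [Matrix.toLin'_apply, Matrix.mul_assoc] using key x hx
end

section
/- Let M be a set, T : M → M a map, and G a group acting on M, with T G-equivariant. Let x₀ ∈ M, g ∈ G, K ∈ ℕ, Ψ : M → (Fin K → ℝ) a dictionary, and γ an invertible K×K real matrix such that Ψ(g • T^[t](x₀)) = γ⁻¹ ⬝ Ψ(T^[t](x₀)) for all t ∈ ℕ. Suppose K₁ is a K×K real matrix with K₁ ⬝ Ψ(T^[t](x₀)) = Ψ(T^[t+1](x₀)) for all t ∈ ℕ, and K₂ is a K×K real matrix with K₂ ⬝ Ψ(T^[t](g • x₀)) = Ψ(T^[t+1](g • x₀)) for all t ∈ ℕ. Then K₁ ⬝ Ψ(T^[t](x₀)) =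 (γ ⬝ K₂ ⬝ γ⁻¹) ⬝ Ψ(T^[t](x₀)) for all t ∈ ℕ; moreover, if the vectors {Ψ(T^[t](x₀)) : t ∈ ℕ} span ℝ^K, then K₁ = γ ⬝ K₂ ⬝ γ⁻¹. -/
/-- Trajectory version of the Koopman conjugation result: if `K₁` propagates the dictionary
along the trajectory of `x₀` and `K₂` propagates it along the trajectory of `g • x₀`, with
`Ψ (g • T^[t] x₀) = γ⁻¹ *ᵥ Ψ (T^[t] x₀)`, then `K₁ *ᵥ Ψ (T^[t] x₀) = (γ * K₂ * γ⁻¹) *ᵥ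
Ψ (T^[t] x₀)` for all `t`; and if the trajectory dictionary vectors span `ℝ^K` then
`K₁ = γ * K₂ * γ⁻¹`. -/
theorem trajectory_koopman_conjugation
    {M : Type*} {G : Type*} [Group G] [MulAction G M]
    (T : M → M) (hT : ∀ (g : G) (x : M), T (g • x) = g • T x)
    (x₀ : M) (g : G) (K : ℕ)
    (Ψ : M → (Fin K → ℝ)) (γ : Matrix (Fin K) (Fin K) ℝ) (hγ : IsUnit γ)
    (hΨγ : ∀ t : ℕ, Ψ (g • T^[t] x₀) = γ⁻¹.mulVec (Ψ (T^[t] x₀)))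
    (K₁ K₂ : Matrix (Fin K) (Fin K) ℝ)
    (hK₁ : ∀ t : ℕ, K₁.mulVec (Ψ (T^[t] x₀)) = Ψ (T^[t+1] x₀))
    (hK₂ : ∀ t : ℕ, K₂.mulVec (Ψ (T^[t] (g • x₀))) = Ψ (T^[t+1] (g • x₀))) :
    (∀ t : ℕ, K₁.mulVec (Ψ (T^[t] x₀)) = (γ * K₂ * γ⁻¹).mulVec (Ψ (T^[t] x₀))) ∧
    (Submodule.span ℝ {v : Fin K → ℝ | ∃ t : ℕ, v = Ψ (T^[t] x₀)} = ⊤ →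
      K₁ = γ * K₂ * γ⁻¹) := by
  have hiter : ∀ t : ℕ, T^[t] (g • x₀) = g • T^[t] x₀ := by
    intro t
    induction t with
    | zero => simp
    | succ n ih => rw [Function.iterate_succ_apply', ih, hT, Function.iterate_succ_apply']
  have key : ∀ t : ℕ, K₁.mulVec (Ψ (T^[t] x₀)) = (γ * K₂ * γ⁻¹).mulVec (Ψ (T^[t] x₀)) := by
    intro t
    have h2 := hK₂ t
    rw [hiter t, hiter (t+1), hΨγ t, hΨγ (t+1)] at h2
    have h3 : γ.mulVec (K₂.mulVec (γ⁻¹.mulVec (Ψ (T^[t] x₀))))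
        = γ.mulVec (γ⁻¹.mulVec (Ψ (T^[t+1] x₀))) := by rw [h2]
    simp only [Matrix.mulVec_mulVec] at h3
    rw [Matrix.mul_nonsing_inv _ ((Matrix.isUnit_iff_isUnit_det γ).mp hγ),
      Matrix.one_mulVec] at h3
    rw [hK₁ t, ← h3, mul_assoc]
  refine ⟨key, fun hspan => ?_⟩
  have heq : ∀ v ∈ {v : Fin K → ℝ | ∃ t : ℕ, v = Ψ (T^[t] x₀)},
      K₁.mulVec v = (γ * K₂ * γ⁻¹).mulVec v := by
    rintro v ⟨t, rfl⟩; exact key t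
  have hall : ∀ v : Fin K → ℝ, K₁.mulVec v = (γ * K₂ * γ⁻¹).mulVec v := by
    intro v
    have hv : v ∈ Submodule.span ℝ {v : Fin K → ℝ | ∃ t : ℕ, v = Ψ (T^[t] x₀)} := by
      rw [hspan]; trivial
    induction hv using Submodule.span_induction with
    | mem x hx => exact heq x hx
    | zero => simp [Matrix.mulVec_zero]
    | add x y _ _ hx hy => simp [Matrix.mulVec_add, hx, hy]
    | smul c x _ hx => simp [Matrix.mulVec_smul, hx]
  ext i j
  have := congrFun (hall (Pi.single j 1)) i
  simpa [Matrix.mulVec_single] using this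
end
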